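/- arXiv:2508.10612 — 3 statements merged into one kernel-verified Lean document; each statement's English description precedes it below -/
import Mathlib

section
/- Let d ≥ 1, p ∈ (1,∞), and let φ, f₀ ∈ L^p ∩ P. Then for every fixed ν > 0, the convolution φ_ν * f₀, defined by (φ_ν * f₀)(x) = ∫_{ℝ^d} φ_ν(x − y) f₀(y) dy, belongs to the closure of co(P_{φ,ν}) with respect to the L^p(ℝ^d) norm. -/
open MeasureTheory ENNReal

noncomputable section

/-- `ℝ^d` with the Euclidean norm and Lebesgue measure. -/
abbrev Euc (d : ℕ) := EuclideanSpace ℝ (Fin d)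

/-- A probability density function on `ℝ^d`. -/
def IsPDF {d : ℕ} (f : Euc d → ℝ) : Prop :=
  Measurable f ∧ (∀ x, 0 ≤ f x) ∧ ∫⁻ x, ENNReal.ofReal (f x) = 1

/-- The dilation `φ_ν(x) = ν^d φ(ν x)`. -/
def dilate {d : ℕ} (φ : Euc d → ℝ) (ν : ℝ) : Euc d → ℝ :=
  fun x => ν ^ d * φ (ν • x)

/-- The location–scale class `P_φ`. -/
def locScaleClass {d : ℕ} (φ : Euc d → ℝ) : Set (Euc d → ℝ) :=
  {g | ∃ μ : Euc d, ∃ ν : ℝ, 0 < ν ∧ g = fun x => dilate φ ν (x - μ)}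

/-- The fixed-scale location class `P_{φ,ν}`. -/
def locClass {d : ℕ} (φ : Euc d → ℝ) (ν : ℝ) : Set (Euc d → ℝ) :=
  {g | ∃ μ : Euc d, g = fun x => dilate φ ν (x - μ)}

/-- `co_m(Q)`: convex combinations of `m` elements of `Q`. -/
def mixComb {d : ℕ} (Q : Set (Euc d → ℝ)) (m : ℕ) : Set (Euc d → ℝ) :=
  {f | ∃ (w : Fin m → ℝ) (g : Fin m → Euc d → ℝ),
    (∀ j, 0 ≤ w j) ∧ (∑ j, w j) = 1 ∧ (∀ j, g j ∈ Q) ∧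
    f = fun x => ∑ j, w j * g j x}

/-- `co(Q) = ⋃_m co_m(Q)`: all finite convex combinations of elements of `Q`. -/
def mix {d : ℕ} (Q : Set (Euc d → ℝ)) : Set (Euc d → ℝ) := ⋃ m, mixComb Q m

/-! The translates `y ↦ φ_ν(· - y)` form a continuous curve of constant norm in `L^p`, so its
Bochner integral against the probability measure `f₀ dy` lies in the closed convex hull of the
curve, and points of that convex hull are finite mixtures of translates. Pairing with indicators
of sets of finite measure and Fubini identify the `L^p`-valued integral with the pointwise
convolution `φ_ν * f₀`. -/

namespace MeasureTheory

section LpIntegral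

variable {α X : Type*} [MeasurableSpace α] [MeasurableSpace X] {μ : Measure α}
  {p : ℝ≥0∞} [Fact (1 ≤ p)]

theorem Lp.exists_continuousLinearMap_eq_setIntegral {s : Set α} (hs : MeasurableSet s)
    (hμs : μ s ≠ ∞) : ∃ L : Lp ℝ p μ →L[ℝ] ℝ, ∀ f, L f = ∫ a in s, f a ∂μ := by
  have : Fact (1 ≤ p.conjExponent) := ⟨le_self_add⟩
  refine ⟨((ContinuousLinearMap.mul ℝ ℝ).lpPairing μ p p.conjExponent).flip
    (indicatorConstLp _ hs hμs 1), fun f => ?_⟩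
  rw [ContinuousLinearMap.flip_apply, ContinuousLinearMap.lpPairing_eq_integral,
    ← integral_indicator hs]
  refine integral_congr_ae ?_
  filter_upwards [indicatorConstLp_coeFn (p := p.conjExponent) (hs := hs) (hμs := hμs)
    (c := (1 : ℝ))] with a ha
  by_cases has : a ∈ s <;> simp [ha, has]

theorem Lp.coeFn_integral_ae_eq [SigmaFinite μ] {η : Measure X} [SFinite η]
    {Φ : X → Lp ℝ p μ} (hΦ : Integrable Φ η) {F : X → α → ℝ}
    (hF : Integrable (Function.uncurry F) (η.prod μ)) (hΦF : ∀ x, Φ x =ᵐ[μ] F x) :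
    ⇑(∫ x, Φ x ∂η) =ᵐ[μ] fun a => ∫ x, F x a ∂η := by
  refine ae_eq_of_forall_setIntegral_eq_of_sigmaFinite
    (fun s _ hμs => integrableOn_Lp_of_measure_ne_top _ Fact.out hμs.ne)
    (fun s _ _ => hF.integral_prod_right.integrableOn) fun s hs hμs => ?_
  obtain ⟨L, hL⟩ := exists_continuousLinearMap_eq_setIntegral (p := p) hs hμs.ne
  calc ∫ a in s, (∫ x, Φ x ∂η) a ∂μ = ∫ x, L (Φ x) ∂η := by
        rw [← hL, L.integral_comp_comm hΦ]
    _ = ∫ x, ∫ a in s, F x a ∂μ ∂η := by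
        simp_rw [hL]
        exact integral_congr_ae (ae_of_all _ fun x => setIntegral_congr_ae hs
          ((hΦF x).mono fun a ha _ => ha))
    _ = ∫ a in s, ∫ x, F x a ∂η ∂μ :=
        integral_integral_swap
          (hF.mono_measure (Measure.prod_mono le_rfl Measure.restrict_le_self))

end LpIntegral

theorem integral_mem_closure_convexHull_range {X E : Type*} [MeasurableSpace X]
    [NormedAddCommGroup E] [NormedSpace ℝ E] [CompleteSpace E] {η : Measure X}
    [IsProbabilityMeasure η] {Φ : X → E} (hΦ : Integrable Φ η) :
    ∫ x, Φ x ∂η ∈ closure (convexHull ℝ (Set.range Φ)) :=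
  (convex_convexHull ℝ _).closure.integral_mem isClosed_closure
    (ae_of_all _ fun x => subset_closure (subset_convexHull ℝ _ ⟨x, rfl⟩)) hΦ

theorem MemLp.comp_smul {E F : Type*} [NormedAddCommGroup E] [NormedSpace ℝ E]
    [MeasurableSpace E] [BorelSpace E] [FiniteDimensional ℝ E] {μ : Measure E}
    [μ.IsAddHaarMeasure] [NormedAddCommGroup F] {p : ℝ≥0∞} {f : E → F} (hf : MemLp f p μ)
    {r : ℝ} (hr : r ≠ 0) : MemLp (fun x => f (r • x)) p μ := by
  refine MemLp.comp_of_map ?_ (measurable_const_smul r).aemeasurable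
  rw [μ.map_addHaar_smul hr]
  exact hf.smul_measure ofReal_ne_top

end MeasureTheory

theorem DomAddAct.mk_neg_vadd_Lp_ae_eq {G E : Type*} [AddCommGroup G] [MeasurableSpace G]
    [MeasurableAdd G] [NormedAddCommGroup E] {μ : Measure G} [μ.IsAddLeftInvariant] {p : ℝ≥0∞}
    (y : G) (f : Lp E p μ) : ⇑(mk (-y) +ᵥ f) =ᵐ[μ] fun x => f (x - y) := by
  simpa [neg_add_eq_sub] using vadd_Lp_ae_eq (mk (-y)) f

section Euclidean

variable {d : ℕ}

theorem MeasureTheory.MemLp.dilate {φ : Euc d → ℝ} {p : ℝ≥0∞} (hφ : MemLp φ p volume) {ν : ℝ}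
    (hν : ν ≠ 0) : MemLp (dilate φ ν) p volume :=
  (hφ.comp_smul hν).const_mul _

theorem IsPDF.integrable {f : Euc d → ℝ} (hf : IsPDF f) : Integrable f := by
  refine ⟨hf.1.aestronglyMeasurable, ?_⟩
  rw [hasFiniteIntegral_iff_ofReal (ae_of_all _ hf.2.1), hf.2.2]
  exact one_lt_top

theorem IsPDF.isProbabilityMeasure_withDensity {f : Euc d → ℝ} (hf : IsPDF f) :
    IsProbabilityMeasure (volume.withDensity fun x => ENNReal.ofReal (f x)) :=
  ⟨by rw [withDensity_apply _ MeasurableSet.univ, Measure.restrict_univ, hf.2.2]⟩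

theorem IsPDF.integral_withDensity {f : Euc d → ℝ} (hf : IsPDF f) (g : Euc d → ℝ) :
    ∫ y, g y ∂(volume.withDensity fun x => ENNReal.ofReal (f x)) = ∫ y, g y * f y := by
  rw [integral_withDensity_eq_integral_toReal_smul hf.1.ennreal_ofReal
    (ae_of_all _ fun _ => ofReal_lt_top)]
  simp [ENNReal.toReal_ofReal (hf.2.1 _), mul_comm]

theorem integrable_comp_sub_prod {k : Euc d → ℝ} (hk : Integrable k) (η : Measure (Euc d))
    [IsFiniteMeasure η] : Integrable (Function.uncurry fun y x => k (x - y)) (η.prod volume) := by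
  simpa [Function.comp_def, Function.uncurry_def] using
    ((integrable_const (1 : ℝ) (μ := η)).convolution_integrand (ContinuousLinearMap.mul ℝ ℝ)
      hk).swap

theorem mem_mix_of_fintype {Q : Set (Euc d → ℝ)} {ι : Type*} [Fintype ι] {w : ι → ℝ}
    {g : ι → Euc d → ℝ} (hw0 : ∀ i, 0 ≤ w i) (hw1 : ∑ i, w i = 1) (hg : ∀ i, g i ∈ Q) :
    (fun x => ∑ i, w i * g i x) ∈ mix Q := by
  let e := (Fintype.equivFin ι).symm
  refine Set.mem_iUnion.2 ⟨_, w ∘ e, g ∘ e, fun j => hw0 _, (e.sum_comp w).trans hw1,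
    fun j => hg _, ?_⟩
  ext x
  exact (e.sum_comp fun i => w i * g i x).symm

theorem exists_mem_mix_ae_eq_of_mem_convexHull {Q : Set (Euc d → ℝ)} {p : ℝ≥0∞} [Fact (1 ≤ p)]
    {h : Lp ℝ p volume} (hh : h ∈ convexHull ℝ {f : Lp ℝ p volume | ∃ g ∈ Q, f =ᵐ[volume] g}) :
    ∃ g ∈ mix Q, h =ᵐ[volume] g := by
  obtain ⟨ι, _, w, f, hw0, hw1, hf, rfl⟩ := mem_convexHull_iff_exists_fintype.1 hh
  choose g hgQ hfg using hf
  refine ⟨_, mem_mix_of_fintype hw0 hw1 hgQ, ?_⟩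
  filter_upwards [Lp.coeFn_finsetSum Finset.univ (fun i => w i • f i),
    ae_all_iff.2 fun i => Lp.coeFn_smul (w i) (f i), ae_all_iff.2 hfg] with x hsum hsmul hfgx
  rw [hsum]
  simp only [Finset.sum_apply, hsmul, hfgx, Pi.smul_apply, smul_eq_mul]

section Translates

variable {p : ℝ≥0∞} {k : Euc d → ℝ} (hk : MemLp k p volume)

theorem MeasureTheory.MemLp.coeFn_translate_toLp_ae_eq (y : Euc d) :
    ⇑(DomAddAct.mk (-y) +ᵥ hk.toLp k) =ᵐ[volume] fun x => k (x - y) :=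
  (DomAddAct.mk_neg_vadd_Lp_ae_eq y _).trans <|
    (measurePreserving_sub_right volume y).quasiMeasurePreserving.ae_eq_comp (MemLp.coeFn_toLp _)

theorem MeasureTheory.MemLp.integrable_translate_toLp [Fact (1 ≤ p)] [Fact (p ≠ ∞)]
    (η : Measure (Euc d)) [IsFiniteMeasure η] :
    Integrable (fun y : Euc d => DomAddAct.mk (-y) +ᵥ hk.toLp k) η :=
  (integrable_const _).mono'
    ((DomAddAct.continuous_mk.comp continuous_neg).vadd continuous_const).aestronglyMeasurable
    (ae_of_all _ fun _ => (DomAddAct.norm_vadd_Lp _ _).le)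

theorem MeasureTheory.MemLp.coeFn_integral_translate_toLp_ae_eq [Fact (1 ≤ p)] [Fact (p ≠ ∞)]
    (hk₁ : Integrable k) {f₀ : Euc d → ℝ} (hf₀ : IsPDF f₀) :
    ⇑(∫ y : Euc d, DomAddAct.mk (-y) +ᵥ hk.toLp k
        ∂(volume.withDensity fun y => ENNReal.ofReal (f₀ y)))
      =ᵐ[volume] fun x => ∫ y, k (x - y) * f₀ y := by
  have := hf₀.isProbabilityMeasure_withDensity
  filter_upwards [Lp.coeFn_integral_ae_eq (hk.integrable_translate_toLp
      (volume.withDensity fun y => ENNReal.ofReal (f₀ y)))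
    (integrable_comp_sub_prod hk₁ _) hk.coeFn_translate_toLp_ae_eq] with x hx
  rw [hx, hf₀.integral_withDensity]

end Translates

end Euclidean

theorem convolution_mem_closure_mixtures_general
    (d : ℕ) (p : ℝ) (hp1 : 1 < p)
    (φ f₀ : Euc d → ℝ) (hφ : IsPDF φ) (hφp : MemLp φ (ENNReal.ofReal p) volume)
    (hf₀ : IsPDF f₀)
    (ν : ℝ) (hν : 0 < ν) :
    ∀ ε : ℝ, 0 < ε →
      ∃ g ∈ mix (locClass φ ν),
        eLpNorm (fun x => g x - ∫ y, dilate φ ν (x - y) * f₀ y)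
            (ENNReal.ofReal p) volume
          ≤ ENNReal.ofReal ε := by
  intro ε hε
  have : Fact (1 ≤ ENNReal.ofReal p) := ⟨ENNReal.one_le_ofReal.2 hp1.le⟩
  have : Fact (ENNReal.ofReal p ≠ ∞) := ⟨ofReal_ne_top⟩
  let η := volume.withDensity fun y => ENNReal.ofReal (f₀ y)
  have : IsProbabilityMeasure η := hf₀.isProbabilityMeasure_withDensity
  have hk := hφp.dilate hν.ne'
  have hk₁ := memLp_one_iff_integrable.1 ((memLp_one_iff_integrable.2 hφ.integrable).dilate hν.ne')
  obtain ⟨h, hh, hdist⟩ := Metric.mem_closure_iff.1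
    (integral_mem_closure_convexHull_range (hk.integrable_translate_toLp η)) ε hε
  obtain ⟨g, hg, hhg⟩ := exists_mem_mix_ae_eq_of_mem_convexHull (Q := locClass φ ν) <|
    convexHull_mono (by rintro _ ⟨y, rfl⟩; exact ⟨_, ⟨y, rfl⟩, hk.coeFn_translate_toLp_ae_eq y⟩) hh
  refine ⟨g, hg, ?_⟩
  have hconv := hk.coeFn_integral_translate_toLp_ae_eq hk₁ hf₀
  refine (eLpNorm_congr_ae (hhg.sub hconv).symm).trans_le ?_
  rw [← Lp.edist_def]
  exact (edist_le_ofReal hε.le).2 (by rw [dist_comm]; exact hdist.le)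

/-- For any fixed `ν > 0`, the convolution `φ_ν * f₀` lies in the `L^p`-closure of
`co(P_{φ,ν})`: for every `ε > 0` there is a finite mixture within `ε` in `L^p` norm. -/
theorem convolution_mem_closure_mixtures
    (d : ℕ) (hd : 1 ≤ d) (p : ℝ) (hp1 : 1 < p)
    (φ f₀ : Euc d → ℝ) (hφ : IsPDF φ) (hφp : MemLp φ (ENNReal.ofReal p) volume)
    (hf₀ : IsPDF f₀) (hf₀p : MemLp f₀ (ENNReal.ofReal p) volume)
    (ν : ℝ) (hν : 0 < ν) :
    ∀ ε : ℝ, 0 < ε →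
      ∃ g ∈ mix (locClass φ ν),
        eLpNorm (fun x => g x - ∫ y, dilate φ ν (x - y) * f₀ y)
            (ENNReal.ofReal p) volume
          ≤ ENNReal.ofReal ε :=
  convolution_mem_closure_mixtures_general d p hp1 φ f₀ hφ hφp hf₀ ν hν
end
end

section
/- Let d ≥ 1, p ∈ (1,∞), q = p/(p−1), and let φ, f₀ ∈ L^p ∩ P. Then for every g ∈ co(P_{φ,ν}) and every ν > 0, ‖g − φ_ν * f₀‖_p ≤ 2 ν^{d/q} ‖φ‖_p, where φ_ν * f₀ denotes the convolution (φ_ν * f₀)(x) = ∫_{ℝ^d} φ_ν(x − y) f₀(y) dy. -/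
open MeasureTheory ENNReal

noncomputable section

/-!
Translating a function does not change its `L^p` norm, and the substitution `x ↦ ν x` shows
`‖φ_ν‖_p = ν^{d - d/p} ‖φ‖_p = ν^{d/q} ‖φ‖_p`; so by the triangle inequality every mixture in
`co(P_{φ,ν})` has norm at most `ν^{d/q} ‖φ‖_p`. The convolution `φ_ν * f₀` is the average of the
translates `φ_ν(· - y)` against the probability measure `f₀(y) dy`; Jensen's inequality for
`t ↦ t^p` followed by Tonelli bounds its norm by `‖φ_ν‖_p` as well. A last triangle inequality
gives the factor `2`.
-/

theorem eLpNorm_comp_sub_right {G E : Type*} [MeasurableSpace G] [AddGroup G] [MeasurableAdd G]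
    [NormedAddCommGroup E] {μ : Measure G} [μ.IsAddRightInvariant] (f : G → E) (a : G)
    (p : ℝ≥0∞) : eLpNorm (fun x => f (x - a)) p μ = eLpNorm f p μ := by
  have h := (MeasurableEquiv.subRight a).measurableEmbedding.eLpNorm_map_measure
    (g := f) (p := p) (μ := μ)
  change eLpNorm f p (Measure.map (· - a) μ) = eLpNorm (fun x => f (x - a)) p μ at h
  rw [map_sub_right_eq_self] at h
  exact h.symm

theorem eLpNorm_dilate {d : ℕ} (φ : Euc d → ℝ) {ν : ℝ} (hν : 0 < ν) (p : ℝ≥0∞) :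
    eLpNorm (dilate φ ν) p volume
      = ENNReal.ofReal (ν ^ ((d : ℝ) - d / p.toReal)) * eLpNorm φ p volume := by
  have hscale := (Homeomorph.smulOfNeZero ν hν.ne').measurableEmbedding.eLpNorm_map_measure
    (g := φ) (p := p) (μ := volume)
  change eLpNorm φ p (Measure.map (ν • ·) volume) = eLpNorm (fun x => φ (ν • x)) p volume
    at hscale
  rw [Measure.map_addHaar_smul volume hν.ne', eLpNorm_smul_measure_of_ne_zero (by simp [hν.ne']),
    finrank_euclideanSpace_fin] at hscale
  have hexp : ν ^ d * |(ν ^ d)⁻¹| ^ (1 / p).toReal = ν ^ ((d : ℝ) - d / p.toReal) := by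
    rw [abs_of_pos (by positivity), one_div, ENNReal.toReal_inv, ← Real.rpow_natCast,
      Real.inv_rpow (by positivity), ← Real.rpow_mul hν.le, ← Real.rpow_neg hν.le,
      ← Real.rpow_add hν, ← div_eq_mul_inv, sub_eq_add_neg]
  calc eLpNorm (dilate φ ν) p volume = eLpNorm ((ν ^ d) • fun x => φ (ν • x)) p volume := rfl
    _ = _ := by
      rw [eLpNorm_const_smul, ← hscale, smul_eq_mul, ← mul_assoc,
        Real.enorm_eq_ofReal (by positivity), ENNReal.ofReal_rpow_of_nonneg (by positivity)
          ENNReal.toReal_nonneg, ← ENNReal.ofReal_mul (by positivity), hexp]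

theorem rpow_lintegral_le_lintegral_rpow {α : Type*} [MeasurableSpace α] (μ : Measure α)
    [IsProbabilityMeasure μ] {f : α → ℝ≥0∞} (hf : AEMeasurable f μ) {p : ℝ} (hp : 1 ≤ p) :
    (∫⁻ x, f x ∂μ) ^ p ≤ ∫⁻ x, f x ^ p ∂μ := by
  have h := eLpNorm'_le_eLpNorm'_of_exponent_le one_pos hp μ hf.aestronglyMeasurable
  simp only [eLpNorm'_eq_lintegral_enorm, enorm_eq_self, ENNReal.rpow_one, div_one] at h
  calc (∫⁻ x, f x ∂μ) ^ p ≤ ((∫⁻ x, f x ^ p ∂μ) ^ (1 / p)) ^ p := by gcongr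
    _ = ∫⁻ x, f x ^ p ∂μ := by
      rw [← ENNReal.rpow_mul, one_div_mul_cancel (by positivity), ENNReal.rpow_one]

section Convolution

variable {G E : Type*} [MeasurableSpace G] [AddGroup G] [MeasurableAdd₂ G] [MeasurableNeg G]
  [NormedAddCommGroup E] [NormedSpace ℝ E] {k : G → E}

theorem MeasureTheory.StronglyMeasurable.integral_comp_sub (hk : StronglyMeasurable k)
    (ρ : Measure G) [SFinite ρ] : StronglyMeasurable fun x => ∫ y, k (x - y) ∂ρ :=
  (hk.comp_measurable measurable_sub).integral_prod_right'

theorem eLpNorm_integral_comp_sub_le {μ : Measure G} [SFinite μ] [μ.IsAddRightInvariant]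
    (ρ : Measure G) [IsProbabilityMeasure ρ] (hk : StronglyMeasurable k) {p : ℝ} (hp : 1 ≤ p) :
    eLpNorm (fun x => ∫ y, k (x - y) ∂ρ) (ENNReal.ofReal p) μ
      ≤ eLpNorm k (ENNReal.ofReal p) μ := by
  have hp0 : 0 < p := zero_lt_one.trans_le hp
  have hker : Measurable fun z : G × G => ‖k (z.1 - z.2)‖ₑ ^ p :=
    (hk.comp_measurable measurable_sub).enorm.pow_const p
  simp only [eLpNorm_eq_lintegral_rpow_enorm_toReal (by simpa using hp0) ENNReal.ofReal_ne_top,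
    ENNReal.toReal_ofReal hp0.le]
  refine ENNReal.rpow_le_rpow ?_ (by positivity)
  calc ∫⁻ x, ‖∫ y, k (x - y) ∂ρ‖ₑ ^ p ∂μ
      ≤ ∫⁻ x, (∫⁻ y, ‖k (x - y)‖ₑ ∂ρ) ^ p ∂μ := by
        gcongr; exact enorm_integral_le_lintegral_enorm _
    _ ≤ ∫⁻ x, ∫⁻ y, ‖k (x - y)‖ₑ ^ p ∂ρ ∂μ := by
        refine lintegral_mono fun x => rpow_lintegral_le_lintegral_rpow ρ ?_ hp
        exact (hk.comp_measurable (measurable_const.sub measurable_id)).enorm.aemeasurable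
    _ = ∫⁻ y, ∫⁻ x, ‖k (x - y)‖ₑ ^ p ∂μ ∂ρ := lintegral_lintegral_swap hker.aemeasurable
    _ = ∫⁻ x, ‖k x‖ₑ ^ p ∂μ := by
        simp only [lintegral_sub_right_eq_self fun x => ‖k x‖ₑ ^ p, lintegral_const,
          measure_univ, mul_one]

end Convolution

theorem eLpNorm_sum_smul_le_of_le {α ι E : Type*} [MeasurableSpace α] [NormedAddCommGroup E]
    [NormedSpace ℝ E] [Fintype ι] {μ : Measure α} {w : ι → ℝ} (hw0 : ∀ j, 0 ≤ w j)
    (hw1 : ∑ j, w j = 1) {g : ι → α → E} (hg : ∀ j, AEStronglyMeasurable (g j) μ)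
    {p : ℝ≥0∞} (hp : 1 ≤ p) {C : ℝ≥0∞} (hC : ∀ j, eLpNorm (g j) p μ ≤ C) :
    eLpNorm (fun x => ∑ j, w j • g j x) p μ ≤ C := by
  calc eLpNorm (fun x => ∑ j, w j • g j x) p μ = eLpNorm (∑ j, w j • g j) p μ := by
        congr 1; ext x; simp only [Finset.sum_apply, Pi.smul_apply]
    _ ≤ ∑ j, eLpNorm (w j • g j) p μ :=
        eLpNorm_sum_le (fun j _ => (hg j).const_smul (w j)) hp
    _ ≤ ∑ j, ENNReal.ofReal (w j) * C := by
        gcongr with j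
        rw [eLpNorm_const_smul, Real.enorm_eq_ofReal (hw0 j)]
        gcongr
        exact hC j
    _ = C := by
        rw [← Finset.sum_mul, ← ENNReal.ofReal_sum_of_nonneg fun j _ => hw0 j, hw1,
          ENNReal.ofReal_one, one_mul]

theorem IsPDF.isProbabilityMeasure {d : ℕ} {f : Euc d → ℝ} (hf : IsPDF f) :
    IsProbabilityMeasure (volume.withDensity fun y => ENNReal.ofReal (f y)) :=
  ⟨by rw [withDensity_apply _ MeasurableSet.univ, Measure.restrict_univ, hf.2.2]⟩

theorem IsPDF.integral_mul_eq {d : ℕ} {f : Euc d → ℝ} (hf : IsPDF f) (k : Euc d → ℝ) :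
    ∫ y, k y * f y = ∫ y, k y ∂(volume.withDensity fun y => ENNReal.ofReal (f y)) := by
  refine Eq.trans ?_ (integral_withDensity_eq_integral_smul hf.1.real_toNNReal k).symm
  refine integral_congr_ae (Filter.Eventually.of_forall fun y => ?_)
  show k y * f y = (f y).toNNReal • k y
  rw [NNReal.smul_def, Real.coe_toNNReal _ (hf.2.1 y), smul_eq_mul, mul_comm]

theorem mixture_convolution_dist_le_general
    (d : ℕ) (p q : ℝ) (hp1 : 1 < p) (hq : q = p / (p - 1))
    (φ f₀ : Euc d → ℝ) (hφ : IsPDF φ) (hf₀ : IsPDF f₀) :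
    ∀ ν : ℝ, 0 < ν → ∀ g ∈ mix (locClass φ ν),
      eLpNorm (fun x => g x - ∫ y, dilate φ ν (x - y) * f₀ y)
          (ENNReal.ofReal p) volume
        ≤ ENNReal.ofReal (2 * ν ^ ((d : ℝ) / q)) * eLpNorm φ (ENNReal.ofReal p) volume := by
  intro ν hν g hg
  obtain ⟨m, w, gs, hw0, hw1, hgs, rfl⟩ := Set.mem_iUnion.mp hg
  choose μs hμs using hgs
  obtain rfl : gs = fun j x => dilate φ ν (x - μs j) := funext hμs
  simp only [hf₀.integral_mul_eq]
  set ρ := volume.withDensity fun y => ENNReal.ofReal (f₀ y)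
  have : IsProbabilityMeasure ρ := hf₀.isProbabilityMeasure
  have hp : 1 ≤ ENNReal.ofReal p := by simpa using hp1.le
  have hφν : Measurable (dilate φ ν) := (hφ.1.comp (measurable_const_smul ν)).const_mul _
  set C := ENNReal.ofReal (ν ^ ((d : ℝ) / q)) * eLpNorm φ (ENNReal.ofReal p) volume
  have hnorm : eLpNorm (dilate φ ν) (ENNReal.ofReal p) volume = C := by
    have hexp : (d : ℝ) - d / p = d / q := by rw [hq]; field_simp
    rw [eLpNorm_dilate φ hν, ENNReal.toReal_ofReal (by linarith), hexp]
  have hmix : eLpNorm (fun x => ∑ j, w j * dilate φ ν (x - μs j)) (ENNReal.ofReal p) volume ≤ C :=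
    eLpNorm_sum_smul_le_of_le hw0 hw1 (fun j => (by fun_prop : Measurable _).aestronglyMeasurable)
      hp (fun j => (eLpNorm_comp_sub_right _ _ _).trans_le hnorm.le)
  have hconv := (eLpNorm_integral_comp_sub_le ρ hφν.stronglyMeasurable hp1.le).trans_eq hnorm
  calc _ ≤ _ + _ := eLpNorm_sub_le (by fun_prop : Measurable _).aestronglyMeasurable
          (hφν.stronglyMeasurable.integral_comp_sub ρ).aestronglyMeasurable hp
    _ ≤ C + C := add_le_add hmix hconv
    _ = _ := by rw [ENNReal.ofReal_mul zero_le_two, ENNReal.ofReal_ofNat, mul_assoc, two_mul]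

/-- Uniform bound on the distance between a finite mixture from `co(P_{φ,ν})` and
the convolution `φ_ν * f₀`: `‖g - φ_ν * f₀‖_p ≤ 2 ν^{d/q} ‖φ‖_p`. -/
theorem mixture_convolution_dist_le
    (d : ℕ) (hd : 1 ≤ d) (p q : ℝ) (hp1 : 1 < p) (hq : q = p / (p - 1))
    (φ f₀ : Euc d → ℝ) (hφ : IsPDF φ) (hφp : MemLp φ (ENNReal.ofReal p) volume)
    (hf₀ : IsPDF f₀) (hf₀p : MemLp f₀ (ENNReal.ofReal p) volume) :
    ∀ ν : ℝ, 0 < ν → ∀ g ∈ mix (locClass φ ν),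
      eLpNorm (fun x => g x - ∫ y, dilate φ ν (x - y) * f₀ y)
          (ENNReal.ofReal p) volume
        ≤ ENNReal.ofReal (2 * ν ^ ((d : ℝ) / q)) * eLpNorm φ (ENNReal.ofReal p) volume :=
  mixture_convolution_dist_le_general d p q hp1 hq φ f₀ hφ hf₀
end
end

section
/- Let d ≥ 1, p ∈ [1,∞), and let φ ∈ P and f₀ ∈ L^p ∩ P. Suppose there are finite constants α, K₁, K₂ > 0 such that ∫_{ℝ^d} ‖x‖₂^α φ(x) dx ≤ K₁ and, for every y ∈ ℝ^d, (∫_{ℝ^d} |f₀(x−y) − f₀(x)|^p dx)^{1/p} ≤ K₂ ‖y‖₂^α. Then for every ν > 0, ‖φ_ν * f₀ − f₀‖_p ≤ K₁ K₂ ν^{−α}, where φ_ν * f₀ denotes the convolution (φ_ν * f₀)(x) = ∫_{ℝ^d} φ_ν(x − y) f₀(y) dy. -/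
open MeasureTheory ENNReal

noncomputable section

/-!
Since `φ_ν` has mass one, `(φ_ν * f₀ - f₀)(x)` is the `φ_ν`-average of the differences
`f₀ (x - y) - f₀ x`. Minkowski's integral inequality bounds its `L^p` norm by
`∫ φ_ν(y) ‖f₀ (· - y) - f₀‖_p dy ≤ K₂ ∫ ‖y‖^α φ_ν(y) dy`, and the substitution `y = z / ν`
turns the last integral into `ν^(-α)` times the `α`-th moment of `φ`.
-/

theorem ENNReal.rpow_one_div_le_of_le_rpow_mul {a b : ℝ≥0∞} {p q : ℝ} (hpq : p.HolderConjugate q)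
    (ha : a ≠ ∞) (h : a ≤ a ^ (1 / q) * b) : a ^ (1 / p) ≤ b := by
  rcases eq_or_ne a 0 with rfl | ha₀
  · rw [ENNReal.zero_rpow_of_pos (one_div_pos.2 hpq.pos)]
    exact zero_le
  have hsplit : a = a ^ (1 / p) * a ^ (1 / q) := by
    rw [← ENNReal.rpow_add _ _ ha₀ ha, one_div, one_div, hpq.inv_add_inv_eq_one, ENNReal.rpow_one]
  replace h : a ^ (1 / p) * a ^ (1 / q) ≤ b * a ^ (1 / q) := by rwa [← hsplit, mul_comm b]
  exact (ENNReal.mul_le_mul_iff_left (ENNReal.rpow_pos (pos_iff_ne_zero.2 ha₀) ha).ne'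
    (ENNReal.rpow_ne_top_of_nonneg (one_div_nonneg.2 hpq.symm.nonneg) ha)).1 h

section Minkowski

variable {α β : Type*} [MeasurableSpace α] [MeasurableSpace β] {μ : Measure α} {ν : Measure β}

theorem lintegral_le_of_forall_lintegral_ne_top [SigmaFinite μ] {F : α → ℝ≥0∞}
    (hF : Measurable F) {c : ℝ≥0∞}
    (h : ∀ H : α → ℝ≥0∞, Measurable H → H ≤ F → ∫⁻ x, H x ∂μ ≠ ∞ → ∫⁻ x, H x ∂μ ≤ c) :
    ∫⁻ x, F x ∂μ ≤ c := by
  set S := spanningSets μ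
  let Fn : ℕ → α → ℝ≥0∞ := fun n => (S n).indicator fun x => min (F x) n
  have hFn_meas n : Measurable (Fn n) :=
    (hF.min measurable_const).indicator (measurableSet_spanningSets μ n)
  have hFn_le n : Fn n ≤ F := fun x => Set.indicator_le (fun _ _ => min_le_left _ _) x
  have hFn_mono : Monotone Fn := fun m n hmn x =>
    (Set.indicator_le_indicator_of_subset (monotone_spanningSets μ hmn) (fun _ => zero_le) x).trans
      (Set.indicator_le_indicator (min_le_min le_rfl (Nat.cast_le.2 hmn)))
  have hFn_sup x : ⨆ n, Fn n x = F x := by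
    refine le_antisymm (iSup_le fun n => hFn_le n x) ?_
    obtain ⟨N, hN⟩ : ∃ N, x ∈ S N := ⟨_, mem_spanningSetsIndex μ x⟩
    calc F x = ⨆ m : ℕ, min (F x) m := by rw [← inf_iSup_eq, iSup_natCast, inf_top_eq]
      _ ≤ ⨆ n, Fn n x := iSup_le fun m => le_iSup_of_le (max m N) <| by
          dsimp only [Fn]
          rw [Set.indicator_of_mem (monotone_spanningSets μ (le_max_right m N) hN)]
          exact min_le_min le_rfl (Nat.cast_le.2 (le_max_left m N))
  have hFn_fin n : ∫⁻ x, Fn n x ∂μ ≠ ∞ := by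
    refine ne_top_of_le_ne_top
      (mul_ne_top (natCast_ne_top n) (measure_spanningSets_lt_top μ n).ne) ?_
    rw [lintegral_indicator (measurableSet_spanningSets μ n), ← setLIntegral_const]
    exact lintegral_mono fun x => min_le_right _ _
  calc ∫⁻ x, F x ∂μ = ⨆ n, ∫⁻ x, Fn n x ∂μ := by
        simp_rw [← hFn_sup]; exact lintegral_iSup hFn_meas hFn_mono
    _ ≤ c := iSup_le fun n => h _ (hFn_meas n) (hFn_le n) (hFn_fin n)

variable [SFinite μ] [SFinite ν] {g : α → β → ℝ≥0∞}

/-- Minkowski's integral inequality for a minorant `H` of finite `L^p` norm: Hölder's inequality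
gives `∫⁻ H ^ p ≤ (∫⁻ H ^ p) ^ (1 / q) * RHS`, and finiteness lets us divide. -/
theorem lintegral_rpow_one_div_le_of_le_lintegral {p q : ℝ} (hpq : p.HolderConjugate q)
    (hg : Measurable (Function.uncurry g)) {H : α → ℝ≥0∞} (hH : Measurable H)
    (hHg : ∀ x, H x ≤ ∫⁻ y, g x y ∂ν) (hH_fin : ∫⁻ x, H x ^ p ∂μ ≠ ∞) :
    (∫⁻ x, H x ^ p ∂μ) ^ (1 / p) ≤ ∫⁻ y, (∫⁻ x, g x y ^ p ∂μ) ^ (1 / p) ∂ν := by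
  set A := ∫⁻ x, H x ^ p ∂μ
  refine ENNReal.rpow_one_div_le_of_le_rpow_mul hpq hH_fin ?_
  have hHp : Measurable fun x => H x ^ (p - 1) := hH.pow_const _
  have holder y :
      ∫⁻ x, H x ^ (p - 1) * g x y ∂μ ≤ A ^ (1 / q) * (∫⁻ x, g x y ^ p ∂μ) ^ (1 / p) := by
    calc ∫⁻ x, H x ^ (p - 1) * g x y ∂μ
        ≤ (∫⁻ x, (H x ^ (p - 1)) ^ q ∂μ) ^ (1 / q) * (∫⁻ x, g x y ^ p ∂μ) ^ (1 / p) :=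
          ENNReal.lintegral_mul_le_Lp_mul_Lq μ hpq.symm hHp.aemeasurable
            hg.of_uncurry_right.aemeasurable
      _ = _ := by simp_rw [← ENNReal.rpow_mul, hpq.sub_one_mul_conj]; rfl
  calc A ≤ ∫⁻ x, H x ^ (p - 1) * ∫⁻ y, g x y ∂ν ∂μ := lintegral_mono fun x => by
        calc H x ^ p = H x ^ (p - 1) * H x := by
              simpa using
                ENNReal.rpow_add_of_nonneg (x := H x) _ _ (sub_nonneg.2 hpq.lt.le) zero_le_one
        _ ≤ _ := by gcongr; exact hHg x
    _ = ∫⁻ y, ∫⁻ x, H x ^ (p - 1) * g x y ∂μ ∂ν := by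
        simp_rw [← lintegral_const_mul _ hg.of_uncurry_left]
        exact lintegral_lintegral_swap ((hHp.comp measurable_fst).mul hg).aemeasurable
    _ ≤ ∫⁻ y, A ^ (1 / q) * (∫⁻ x, g x y ^ p ∂μ) ^ (1 / p) ∂ν := lintegral_mono holder
    _ = A ^ (1 / q) * ∫⁻ y, (∫⁻ x, g x y ^ p ∂μ) ^ (1 / p) ∂ν :=
        lintegral_const_mul _ ((hg.pow_const p).lintegral_prod_left'.pow_const _)

theorem eLpNorm_lintegral_le_lintegral_eLpNorm [SigmaFinite μ] {p : ℝ≥0∞} (hp : 1 ≤ p)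
    (hp_top : p ≠ ∞) (hg : Measurable (Function.uncurry g)) :
    eLpNorm (fun x => ∫⁻ y, g x y ∂ν) p μ ≤ ∫⁻ y, eLpNorm (fun x => g x y) p μ ∂ν := by
  have hp₀ : p ≠ 0 := (zero_lt_one.trans_le hp).ne'
  simp_rw [eLpNorm_eq_lintegral_rpow_enorm_toReal hp₀ hp_top, enorm_eq_self]
  have hr : 1 ≤ p.toReal := by simpa using ENNReal.toReal_mono hp_top hp
  generalize p.toReal = r at hr
  rcases hr.eq_or_lt with rfl | hr
  · simpa using (lintegral_lintegral_swap hg.aemeasurable).le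
  have hpq := Real.HolderConjugate.conjExponent hr
  have hr₀ : 0 < r := zero_lt_one.trans hr
  rw [one_div, ENNReal.rpow_inv_le_iff hr₀]
  refine lintegral_le_of_forall_lintegral_ne_top (hg.lintegral_prod_right.pow_const r)
    fun H hH hHG hH_fin => ?_
  have key := lintegral_rpow_one_div_le_of_le_lintegral (μ := μ) hpq hg (hH.pow_const r⁻¹)
    (fun x => (ENNReal.rpow_inv_le_iff hr₀).2 (hHG x))
    (by simpa only [ENNReal.rpow_inv_rpow hr₀.ne'] using hH_fin)
  simp only [ENNReal.rpow_inv_rpow hr₀.ne', one_div] at key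
  exact (ENNReal.rpow_inv_le_iff hr₀).1 key

end Minkowski

theorem enorm_convolution_sub_self_le {G : Type*} [MeasurableSpace G] [AddCommGroup G]
    [MeasurableAdd G] [MeasurableNeg G] {μ : Measure G} [μ.IsAddLeftInvariant] [μ.IsNegInvariant]
    {φ f : G → ℝ} (hφ : Integrable φ μ) (hφ₁ : ∫ y, φ y ∂μ = 1) (hf : AEStronglyMeasurable f μ)
    (x : G) :
    ‖(∫ y, φ (x - y) * f y ∂μ) - f x‖ₑ ≤ ∫⁻ y, ‖φ y * (f (x - y) - f x)‖ₑ ∂μ := by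
  by_cases hint : Integrable (fun y => φ y * (f (x - y) - f x)) μ
  · have hconv : (∫ y, φ (x - y) * f y ∂μ) - f x = ∫ y, φ y * (f (x - y) - f x) ∂μ := by
      have hsplit : (fun y => φ y * f (x - y)) = fun y => φ y * (f (x - y) - f x) + φ y * f x := by
        ext y; ring
      rw [← integral_sub_left_eq_self (fun y => φ (x - y) * f y) μ x]
      simp only [sub_sub_self]
      rw [hsplit, integral_add hint (hφ.mul_const _), integral_mul_const, hφ₁, one_mul,
        add_sub_cancel_right]
    rw [hconv]
    exact enorm_integral_le_lintegral_enorm _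
  -- otherwise the right-hand side is infinite
  · have hmeas : AEStronglyMeasurable (fun y => φ y * (f (x - y) - f x)) μ :=
      hφ.1.mul ((hf.comp_measurePreserving (Measure.measurePreserving_sub_left μ x)).sub
        aestronglyMeasurable_const)
    rw [Integrable, hasFiniteIntegral_iff_enorm, not_and, not_lt, top_le_iff] at hint
    rw [hint hmeas]
    exact le_top

theorem lintegral_comp_smul {E : Type*} [NormedAddCommGroup E] [NormedSpace ℝ E]
    [MeasurableSpace E] [BorelSpace E] [FiniteDimensional ℝ E] (μ : Measure E)
    [μ.IsAddHaarMeasure] (f : E → ℝ≥0∞) {R : ℝ} (hR : R ≠ 0) :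
    ∫⁻ x, f (R • x) ∂μ = ENNReal.ofReal |(R ^ Module.finrank ℝ E)⁻¹| * ∫⁻ x, f x ∂μ := by
  calc ∫⁻ x, f (R • x) ∂μ = ∫⁻ x, f x ∂(μ.map (R • ·)) :=
        (lintegral_map_equiv f (MeasurableEquiv.smul₀ R hR)).symm
    _ = _ := by rw [Measure.map_addHaar_smul μ hR, lintegral_smul_measure, smul_eq_mul]

theorem lintegral_ofReal_dilate_mul {d : ℕ} (φ : Euc d → ℝ) {ν : ℝ} (hν : 0 < ν)
    (h : Euc d → ℝ≥0∞) :
    ∫⁻ x, ENNReal.ofReal (dilate φ ν x) * h x = ∫⁻ x, ENNReal.ofReal (φ x) * h (ν⁻¹ • x) := by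
  have hνd : 0 < ν ^ d := pow_pos hν d
  calc ∫⁻ x, ENNReal.ofReal (dilate φ ν x) * h x
      = ENNReal.ofReal (ν ^ d) * ∫⁻ x, ENNReal.ofReal (φ (ν • x)) * h (ν⁻¹ • ν • x) := by
        simp_rw [dilate, ENNReal.ofReal_mul hνd.le, mul_assoc, inv_smul_smul₀ hν.ne']
        exact lintegral_const_mul' _ _ ofReal_ne_top
    _ = ∫⁻ x, ENNReal.ofReal (φ x) * h (ν⁻¹ • x) := by
        rw [lintegral_comp_smul volume (fun x => ENNReal.ofReal (φ x) * h (ν⁻¹ • x)) hν.ne',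
          finrank_euclideanSpace_fin, ← mul_assoc, ← ENNReal.ofReal_mul hνd.le,
          abs_of_pos (inv_pos.2 hνd), mul_inv_cancel₀ hνd.ne', ENNReal.ofReal_one, one_mul]

theorem lintegral_ofReal_norm_rpow_mul_dilate {d : ℕ} (φ : Euc d → ℝ) {ν : ℝ} (hν : 0 < ν)
    (α : ℝ) :
    ∫⁻ x, ENNReal.ofReal (‖x‖ ^ α * dilate φ ν x)
      = ENNReal.ofReal (ν ^ (-α)) * ∫⁻ x, ENNReal.ofReal (‖x‖ ^ α * φ x) := by
  have hscale (x : Euc d) : ‖ν⁻¹ • x‖ ^ α = ν ^ (-α) * ‖x‖ ^ α := by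
    rw [norm_smul, Real.norm_of_nonneg (inv_nonneg.2 hν.le),
      Real.mul_rpow (inv_nonneg.2 hν.le) (norm_nonneg x), Real.inv_rpow hν.le, Real.rpow_neg hν.le]
  simp_rw [mul_comm (‖_‖ ^ α), ENNReal.ofReal_mul' (Real.rpow_nonneg (norm_nonneg _) α),
    lintegral_ofReal_dilate_mul φ hν, hscale, ENNReal.ofReal_mul (Real.rpow_nonneg hν.le _),
    mul_left_comm _ (ENNReal.ofReal (ν ^ (-α)))]
  exact lintegral_const_mul' _ _ ofReal_ne_top

namespace IsPDF

variable {d : ℕ} {f : Euc d → ℝ}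

theorem dilate (hf : IsPDF f) {ν : ℝ} (hν : 0 < ν) : IsPDF (dilate f ν) := by
  obtain ⟨hf_meas, hf_nonneg, hf_one⟩ := hf
  refine ⟨(hf_meas.comp (measurable_const_smul ν)).const_mul _,
    fun x => mul_nonneg (pow_nonneg hν.le d) (hf_nonneg _), ?_⟩
  simpa [hf_one] using lintegral_ofReal_dilate_mul f hν 1

theorem integrable_s7 (hf : IsPDF f) : Integrable f := by
  refine ⟨hf.1.aestronglyMeasurable, ?_⟩
  rw [hasFiniteIntegral_iff_ofReal (.of_forall hf.2.1), hf.2.2]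
  exact one_lt_top

theorem integral_eq_one (hf : IsPDF f) : ∫ x, f x = 1 := by
  rw [integral_eq_lintegral_of_nonneg_ae (.of_forall hf.2.1) hf.1.aestronglyMeasurable, hf.2.2,
    ENNReal.toReal_one]

end IsPDF

theorem convolution_smoothing_error_le_general
    (d : ℕ) (p α K₁ K₂ : ℝ) (hp1 : 1 ≤ p)
    (hK₂ : 0 < K₂)
    (φ f₀ : Euc d → ℝ) (hφ : IsPDF φ)
    (hf₀ : IsPDF f₀)
    (hmom : ∫⁻ x, ENNReal.ofReal (‖x‖ ^ α * φ x) ≤ ENNReal.ofReal K₁)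
    (hsmooth : ∀ y : Euc d,
      eLpNorm (fun x => f₀ (x - y) - f₀ x) (ENNReal.ofReal p) volume
        ≤ ENNReal.ofReal (K₂ * ‖y‖ ^ α)) :
    ∀ ν : ℝ, 0 < ν →
      eLpNorm (fun x => (∫ y, dilate φ ν (x - y) * f₀ y) - f₀ x)
          (ENNReal.ofReal p) volume
        ≤ ENNReal.ofReal (K₁ * K₂ * ν ^ (-α)) := by
  intro ν hν
  have hφν := hφ.dilate hν
  have hφν_meas := hφν.1
  have hf₀_meas := hf₀.1
  have hp : 1 ≤ ENNReal.ofReal p := by simpa using ENNReal.ofReal_le_ofReal hp1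
  calc _ ≤ eLpNorm (fun x => ∫⁻ y, ‖dilate φ ν y * (f₀ (x - y) - f₀ x)‖ₑ) (.ofReal p) volume :=
        eLpNorm_mono_enorm fun x => by
          simpa using enorm_convolution_sub_self_le hφν.integrable_s7 hφν.integral_eq_one
            hf₀_meas.aestronglyMeasurable x
    _ ≤ ∫⁻ y, eLpNorm (fun x => ‖dilate φ ν y * (f₀ (x - y) - f₀ x)‖ₑ) (.ofReal p) volume :=
        eLpNorm_lintegral_le_lintegral_eLpNorm hp ofReal_ne_top (by fun_prop)
    _ = ∫⁻ y, ‖dilate φ ν y‖ₑ * eLpNorm (fun x => f₀ (x - y) - f₀ x) (.ofReal p) volume := by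
        simp_rw [eLpNorm_enorm]
        exact lintegral_congr fun y => eLpNorm_const_smul (dilate φ ν y) _ _ _
    _ ≤ ∫⁻ y, ‖dilate φ ν y‖ₑ * ENNReal.ofReal (K₂ * ‖y‖ ^ α) := by
        gcongr with y; exact hsmooth y
    _ = ENNReal.ofReal K₂ * ∫⁻ y, ENNReal.ofReal (‖y‖ ^ α * dilate φ ν y) := by
        rw [← lintegral_const_mul' _ _ ofReal_ne_top]
        refine lintegral_congr fun y => ?_
        rw [Real.enorm_of_nonneg (hφν.2.1 y), ← ENNReal.ofReal_mul (hφν.2.1 y),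
          ← ENNReal.ofReal_mul hK₂.le]
        ring_nf
    _ ≤ ENNReal.ofReal K₂ * (ENNReal.ofReal (ν ^ (-α)) * ENNReal.ofReal K₁) := by
        rw [lintegral_ofReal_norm_rpow_mul_dilate φ hν]
        gcongr
    _ = ENNReal.ofReal (K₁ * K₂ * ν ^ (-α)) := by
        rw [← ENNReal.ofReal_mul (Real.rpow_nonneg hν.le _), ← ENNReal.ofReal_mul hK₂.le]
        ring_nf

/-- Bound on the smoothing error `‖φ_ν * f₀ − f₀‖_p ≤ K₁ K₂ ν^{−α}`
(Part 3 of the proof of Theorem 1). -/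
theorem convolution_smoothing_error_le
    (d : ℕ) (hd : 1 ≤ d) (p α K₁ K₂ : ℝ) (hp1 : 1 ≤ p)
    (hα : 0 < α) (hK₁ : 0 < K₁) (hK₂ : 0 < K₂)
    (φ f₀ : Euc d → ℝ) (hφ : IsPDF φ)
    (hf₀ : IsPDF f₀) (hf₀p : MemLp f₀ (ENNReal.ofReal p) volume)
    (hmom : ∫⁻ x, ENNReal.ofReal (‖x‖ ^ α * φ x) ≤ ENNReal.ofReal K₁)
    (hsmooth : ∀ y : Euc d,
      eLpNorm (fun x => f₀ (x - y) - f₀ x) (ENNReal.ofReal p) volume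
        ≤ ENNReal.ofReal (K₂ * ‖y‖ ^ α)) :
    ∀ ν : ℝ, 0 < ν →
      eLpNorm (fun x => (∫ y, dilate φ ν (x - y) * f₀ y) - f₀ x)
          (ENNReal.ofReal p) volume
        ≤ ENNReal.ofReal (K₁ * K₂ * ν ^ (-α)) :=
  convolution_smoothing_error_le_general d p α K₁ K₂ hp1 hK₂ φ f₀ hφ hf₀ hmom hsmooth
end
end
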